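/- arXiv:2408.04357 — 5 statements merged into one kernel-verified Lean document; each statement's English description precedes it below -/
import Mathlib

section
/- Let K_1, K_2 be entrywise nonnegative n×n matrices and α ∈ [0,1]. Then the Hadamard weighted geometric mean K_1^{(α)} ∘ K_2^{(1-α)} (with entries (K_1)_{ij}^α (K_2)_{ij}^{1-α}) satisfies ‖K_1^{(α)} ∘ K_2^{(1-α)}‖ ≤ ‖K_1‖^α ‖K_2‖^{1-α}, where ‖·‖ is the operator norm on ℝ^n with the Euclidean norm. -/
/-!
Entrywise, the weighted AM–GM inequality gives, for any `s, t > 0`,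
`K₁ᵢⱼ^α K₂ᵢⱼ^(1-α) ≤ s^α t^(1-α) (α K₁ᵢⱼ / s + (1-α) K₂ᵢⱼ / t)`.
The ℓ² operator norm is monotone under entrywise domination `|A| ≤ B`, so with `s ≥ ‖K₁‖` and
`t ≥ ‖K₂‖` the triangle inequality bounds the norm of the Hadamard geometric mean by
`s^α t^(1-α) (α + (1-α))`. Letting `s ↓ ‖K₁‖`, `t ↓ ‖K₂‖` gives the claim (the detour through
positive `s, t` avoids dividing by a vanishing norm).
-/

/-- The ℓ² → ℓ² operator norm of a real `n × n` matrix. -/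
noncomputable def opNorm {n : ℕ} (A : Matrix (Fin n) (Fin n) ℝ) : ℝ :=
  ‖LinearMap.toContinuousLinearMap (Matrix.toEuclideanLin A)‖

open Filter Topology
open scoped Matrix.Norms.L2Operator

theorem opNorm_eq_l2_opNorm {n : ℕ} (A : Matrix (Fin n) (Fin n) ℝ) : opNorm A = ‖A‖ := rfl

theorem Real.geom_mean_le_scaled_arith_mean2_weighted {α x y s t : ℝ} (hα0 : 0 ≤ α)
    (hα1 : α ≤ 1) (hx : 0 ≤ x) (hy : 0 ≤ y) (hs : 0 < s) (ht : 0 < t) :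
    x ^ α * y ^ (1 - α) ≤ s ^ α * t ^ (1 - α) * (α * (x / s) + (1 - α) * (y / t)) := by
  have amgm := Real.geom_mean_le_arith_mean2_weighted hα0 (sub_nonneg.2 hα1)
    (div_nonneg hx hs.le) (div_nonneg hy ht.le) (add_sub_cancel α 1)
  rw [Real.div_rpow hx hs.le, Real.div_rpow hy ht.le, div_mul_div_comm,
    div_le_iff₀ (by positivity)] at amgm
  linarith

theorem EuclideanSpace.norm_le_norm_of_abs_le_abs {ι : Type*} [Fintype ι]
    {x y : EuclideanSpace ℝ ι} (h : ∀ i, |x i| ≤ |y i|) : ‖x‖ ≤ ‖y‖ := by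
  rw [EuclideanSpace.norm_eq, EuclideanSpace.norm_eq]
  gcongr with i
  exact h i

namespace Matrix

variable {m n : Type*} [Fintype m] [Fintype n] [DecidableEq n]

theorem l2_opNorm_le_of_abs_le {A B : Matrix m n ℝ} (h : ∀ i j, |A i j| ≤ B i j) :
    ‖A‖ ≤ ‖B‖ := by
  refine ContinuousLinearMap.opNorm_le_bound _ (norm_nonneg _) fun x => ?_
  let y : EuclideanSpace ℝ n := WithLp.toLp 2 fun j => |x j|
  have hy : ‖y‖ = ‖x‖ := by simp [EuclideanSpace.norm_eq, y]
  calc _ ≤ ‖(EuclideanSpace.equiv m ℝ).symm (B *ᵥ y)‖ := by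
        refine EuclideanSpace.norm_le_norm_of_abs_le_abs fun i => ?_
        refine le_trans ?_ (le_abs_self _)
        change |∑ j, A i j * x j| ≤ ∑ j, B i j * |x j|
        refine (Finset.abs_sum_le_sum_abs _ _).trans (Finset.sum_le_sum fun j _ => ?_)
        rw [abs_mul]
        exact mul_le_mul_of_nonneg_right (h i j) (abs_nonneg _)
    _ ≤ ‖B‖ * ‖y‖ := B.l2_opNorm_mulVec y
    _ = ‖B‖ * ‖x‖ := by rw [hy]

noncomputable def hadamardGeomMean (α : ℝ) (A B : Matrix m n ℝ) : Matrix m n ℝ :=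
  of fun i j => A i j ^ α * B i j ^ (1 - α)

variable {α : ℝ} {A B : Matrix m n ℝ}

theorem l2_opNorm_hadamardGeomMean_le_of_le (hA : ∀ i j, 0 ≤ A i j) (hB : ∀ i j, 0 ≤ B i j)
    (hα0 : 0 ≤ α) (hα1 : α ≤ 1) {s t : ℝ} (hs : 0 < s) (ht : 0 < t) (hAs : ‖A‖ ≤ s)
    (hBt : ‖B‖ ≤ t) :
    ‖hadamardGeomMean α A B‖ ≤ s ^ α * t ^ (1 - α) := by
  set c := s ^ α * t ^ (1 - α)
  calc ‖hadamardGeomMean α A B‖ ≤ ‖c • ((α / s) • A + ((1 - α) / t) • B)‖ := by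
        refine l2_opNorm_le_of_abs_le fun i j => ?_
        simp only [hadamardGeomMean, of_apply, smul_apply, add_apply, smul_eq_mul]
        rw [abs_of_nonneg <|
          mul_nonneg (Real.rpow_nonneg (hA i j) _) (Real.rpow_nonneg (hB i j) _)]
        simpa only [div_mul_eq_mul_div, mul_div_assoc] using
          Real.geom_mean_le_scaled_arith_mean2_weighted hα0 hα1 (hA i j) (hB i j) hs ht
    _ ≤ c * ((α / s) * ‖A‖ + ((1 - α) / t) * ‖B‖) := by
        rw [norm_smul, Real.norm_of_nonneg (by positivity)]
        gcongr
        refine (norm_add_le _ _).trans_eq ?_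
        rw [norm_smul, norm_smul, Real.norm_of_nonneg (by positivity),
          Real.norm_of_nonneg (by positivity)]
    _ ≤ c * ((α / s) * s + ((1 - α) / t) * t) := by gcongr
    _ = c := by field_simp; ring

theorem l2_opNorm_hadamardGeomMean_le (hA : ∀ i j, 0 ≤ A i j) (hB : ∀ i j, 0 ≤ B i j)
    (hα0 : 0 ≤ α) (hα1 : α ≤ 1) :
    ‖hadamardGeomMean α A B‖ ≤ ‖A‖ ^ α * ‖B‖ ^ (1 - α) := by
  have hlim : Tendsto (fun ε => (‖A‖ + ε) ^ α * (‖B‖ + ε) ^ (1 - α)) (𝓝[>] 0)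
      (𝓝 (‖A‖ ^ α * ‖B‖ ^ (1 - α))) := by
    have hcont : Continuous fun ε => (‖A‖ + ε) ^ α * (‖B‖ + ε) ^ (1 - α) :=
      ((Real.continuous_rpow_const hα0).comp (continuous_const.add continuous_id)).mul
        ((Real.continuous_rpow_const (sub_nonneg.2 hα1)).comp
          (continuous_const.add continuous_id))
    simpa using (hcont.tendsto 0).mono_left nhdsWithin_le_nhds
  refine ge_of_tendsto hlim ?_
  filter_upwards [self_mem_nhdsWithin] with ε (hε : 0 < ε)
  exact l2_opNorm_hadamardGeomMean_le_of_le hA hB hα0 hα1 (by positivity) (by positivity)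
    (le_add_of_nonneg_right hε.le) (le_add_of_nonneg_right hε.le)

end Matrix

/-- For nonnegative matrices `K₁, K₂` and `α ∈ [0,1]`, the Hadamard weighted
geometric mean satisfies `‖K₁^{(α)} ∘ K₂^{(1-α)}‖ ≤ ‖K₁‖^α * ‖K₂‖^(1-α)`. -/
theorem opNorm_hadamard_geom_mean_le {n : ℕ} (K₁ K₂ : Matrix (Fin n) (Fin n) ℝ)
    (hK₁ : ∀ i j, 0 ≤ K₁ i j) (hK₂ : ∀ i j, 0 ≤ K₂ i j) (α : ℝ) (hα0 : 0 ≤ α) (hα1 : α ≤ 1) :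
    opNorm (Matrix.of fun i j => K₁ i j ^ α * K₂ i j ^ (1 - α)) ≤
      opNorm K₁ ^ α * opNorm K₂ ^ (1 - α) := by
  simp only [opNorm_eq_l2_opNorm]
  exact Matrix.l2_opNorm_hadamardGeomMean_le hK₁ hK₂ hα0 hα1
end

section
/- Let {K_{ij}} (1 ≤ i ≤ n, 1 ≤ j ≤ m) be entrywise nonnegative N×N matrices and α_1,...,α_m nonnegative reals with Σ α_j = 1. Then the matrix product K = (K_{11}^{(α_1)} ∘ ··· ∘ K_{1m}^{(α_m)}) ··· (K_{n1}^{(α_1)} ∘ ··· ∘ K_{nm}^{(α_m)}) satisfies the entrywise inequality K ≤ (K_{11}···K_{n1})^{(α_1)} ∘ ··· ∘ (K_{1m}···K_{nm})^{(α_m)}. -/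
/-- Entrywise nonnegativity of a product of entrywise nonnegative matrices. -/
lemma aux_list_prod_entry_nonneg {N n : ℕ} (M : Fin n → Matrix (Fin N) (Fin N) ℝ)
    (h : ∀ i x y, 0 ≤ M i x y) : ∀ x y, 0 ≤ (List.ofFn M).prod x y := by
  induction n with
  | zero =>
      intro x y
      rw [List.ofFn_zero, List.prod_nil, Matrix.one_apply]
      split <;> norm_num
  | succ n ih =>
      intro x y
      rw [List.ofFn_succ, List.prod_cons, Matrix.mul_apply]
      exact Finset.sum_nonneg fun z _ =>
        mul_nonneg (h 0 x z) (ih _ (fun i x y => h i.succ x y) z y)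

/-- Generalized (multi-factor weighted) Hölder inequality. -/
lemma aux_holder {m : ℕ} {ζ : Type*} [Fintype ζ] (f : Fin m → ζ → ℝ)
    (hf : ∀ j z, 0 ≤ f j z) (α : Fin m → ℝ) (hα : ∀ j, 0 ≤ α j)
    (hsum : ∑ j, α j = 1) :
    ∑ z, ∏ j, (f j z) ^ (α j) ≤ ∏ j, (∑ z, f j z) ^ (α j) := by
  set S : Fin m → ℝ := fun j => ∑ z, f j z with hS
  have hSnn : ∀ j, 0 ≤ S j := fun j => Finset.sum_nonneg fun z _ => hf j z
  by_cases hex : ∃ j, α j ≠ 0 ∧ S j = 0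
  · obtain ⟨j0, hj0, hS0⟩ := hex
    have hfz : ∀ z, f j0 z = 0 := by
      intro z
      have := (Finset.sum_eq_zero_iff_of_nonneg (fun z _ => hf j0 z)).mp hS0
      exact this z (Finset.mem_univ z)
    have lhs0 : ∑ z, ∏ j, (f j z) ^ (α j) = 0 :=
      Finset.sum_eq_zero fun z _ =>
        Finset.prod_eq_zero (Finset.mem_univ j0)
          (by rw [hfz z]; exact Real.zero_rpow hj0)
    rw [lhs0]
    exact Finset.prod_nonneg fun j _ => Real.rpow_nonneg (hSnn j) _
  · push_neg at hex
    have hSpos : ∀ j, α j ≠ 0 → 0 < S j := fun j hj =>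
      (hSnn j).lt_of_ne' (hex j hj)
    have key : ∀ z, ∏ j, (f j z) ^ (α j)
        ≤ (∏ j, S j ^ (α j)) * ∑ j, α j * (f j z / S j) := by
      intro z
      have step1 : ∏ j, (f j z) ^ (α j)
          = (∏ j, S j ^ (α j)) * ∏ j, (f j z / S j) ^ (α j) := by
        rw [← Finset.prod_mul_distrib]
        refine Finset.prod_congr rfl fun j _ => ?_
        by_cases hαj : α j = 0
        · simp [hαj]
        · rw [← Real.mul_rpow (hSpos j hαj).le
            (div_nonneg (hf j z) (hSpos j hαj).le),
            mul_div_cancel₀ _ (hSpos j hαj).ne']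
      have step2 : ∏ j, (f j z / S j) ^ (α j) ≤ ∑ j, α j * (f j z / S j) :=
        Real.geom_mean_le_arith_mean_weighted Finset.univ _ _
          (fun j _ => hα j) hsum
          (fun j _ => by
            by_cases hαj : α j = 0
            · by_cases hSj : S j = 0
              · simp [hSj]
              · exact div_nonneg (hf j z) (hSnn j)
            · exact div_nonneg (hf j z) (hSpos j hαj).le)
      rw [step1]
      exact mul_le_mul_of_nonneg_left step2
        (Finset.prod_nonneg fun j _ => Real.rpow_nonneg (hSnn j) _)
    calc ∑ z, ∏ j, (f j z) ^ (α j)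
        ≤ ∑ z, (∏ j, S j ^ (α j)) * ∑ j, α j * (f j z / S j) :=
          Finset.sum_le_sum fun z _ => key z
      _ = (∏ j, S j ^ (α j)) * ∑ z, ∑ j, α j * (f j z / S j) := by
          rw [Finset.mul_sum]
      _ = (∏ j, S j ^ (α j)) * 1 := by
          congr 1
          rw [Finset.sum_comm]
          calc ∑ j, ∑ z, α j * (f j z / S j)
              = ∑ j : Fin m, α j * (S j / S j) := by
                refine Finset.sum_congr rfl fun j _ => ?_
                rw [← Finset.mul_sum, ← Finset.sum_div]
            _ = ∑ j, α j := by
                refine Finset.sum_congr rfl fun j _ => ?_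
                by_cases hαj : α j = 0
                · simp [hαj]
                · rw [div_self (hSpos j hαj).ne', mul_one]
            _ = 1 := hsum
      _ = ∏ j, S j ^ (α j) := mul_one _

/-- With `∑ j, α j = 1`, the product of Hadamard weighted geometric means is
entrywise dominated by the Hadamard weighted geometric mean of the corresponding
matrix products: `(K₁₁^{(α₁)}∘⋯∘K₁ₘ^{(αₘ)}) ⋯ (Kₙ₁^{(α₁)}∘⋯∘Kₙₘ^{(αₘ)})
  ≤ (K₁₁⋯Kₙ₁)^{(α₁)} ∘ ⋯ ∘ (K₁ₘ⋯Kₙₘ)^{(αₘ)}`. -/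
theorem prod_hadamard_geom_mean_le {N n m : ℕ}
    (K : Fin n → Fin m → Matrix (Fin N) (Fin N) ℝ) (α : Fin m → ℝ)
    (hK : ∀ i j x y, 0 ≤ K i j x y) (hα : ∀ j, 0 ≤ α j) (hsum : ∑ j, α j = 1) :
    ∀ x y,
      (List.ofFn (fun i : Fin n =>
          Matrix.of fun x y => ∏ j, (K i j x y) ^ (α j))).prod x y ≤
      ∏ j, ((List.ofFn (fun i : Fin n => K i j)).prod x y) ^ (α j) := by
  induction n with
  | zero =>
      intro x y
      simp only [List.ofFn_zero, List.prod_nil, Matrix.one_apply]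
      split
      · rw [Finset.prod_congr rfl fun j _ => Real.one_rpow (α j)]
        simp
      · exact Finset.prod_nonneg fun j _ => Real.rpow_nonneg le_rfl _
  | succ n ih =>
      intro x y
      rw [List.ofFn_succ, List.prod_cons, Matrix.mul_apply]
      set Q : Fin m → Matrix (Fin N) (Fin N) ℝ :=
        fun j => (List.ofFn fun i : Fin n => K i.succ j).prod with hQ
      have hQnn : ∀ j z y, 0 ≤ Q j z y := fun j =>
        aux_list_prod_entry_nonneg _ (fun i x y => hK i.succ j x y)
      have step1 : ∀ z : Fin N,
          (Matrix.of fun x y => ∏ j, (K 0 j x y) ^ (α j)) x z *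
            (List.ofFn fun i : Fin n =>
              Matrix.of fun x y => ∏ j, (K i.succ j x y) ^ (α j)).prod z y
          ≤ ∏ j, (K 0 j x z * Q j z y) ^ (α j) := by
        intro z
        have h1 := ih (fun i j => K i.succ j) (fun i j x y => hK i.succ j x y) z y
        calc (Matrix.of fun x y => ∏ j, (K 0 j x y) ^ (α j)) x z *
              (List.ofFn fun i : Fin n =>
                Matrix.of fun x y => ∏ j, (K i.succ j x y) ^ (α j)).prod z y
            ≤ (∏ j, (K 0 j x z) ^ (α j)) * ∏ j, (Q j z y) ^ (α j) := by
              simp only [Matrix.of_apply]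
              exact mul_le_mul_of_nonneg_left h1
                (Finset.prod_nonneg fun j _ => Real.rpow_nonneg (hK 0 j x z) _)
          _ = ∏ j, (K 0 j x z * Q j z y) ^ (α j) := by
              rw [← Finset.prod_mul_distrib]
              exact Finset.prod_congr rfl fun j _ =>
                (Real.mul_rpow (hK 0 j x z) (hQnn j z y)).symm
      calc ∑ z, (Matrix.of fun x y => ∏ j, (K 0 j x y) ^ (α j)) x z *
              (List.ofFn fun i : Fin n =>
                Matrix.of fun x y => ∏ j, (K i.succ j x y) ^ (α j)).prod z y
          ≤ ∑ z, ∏ j, (K 0 j x z * Q j z y) ^ (α j) :=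
            Finset.sum_le_sum fun z _ => step1 z
        _ ≤ ∏ j, (∑ z, K 0 j x z * Q j z y) ^ (α j) :=
            aux_holder _ (fun j z => mul_nonneg (hK 0 j x z) (hQnn j z y))
              α hα hsum
        _ = ∏ j, ((List.ofFn fun i : Fin (n + 1) => K i j).prod x y) ^ (α j) := by
            refine Finset.prod_congr rfl fun j _ => ?_
            rw [List.ofFn_succ, List.prod_cons, Matrix.mul_apply]
end

section
/- Let A be an entrywise nonnegative n×n matrix and S(A) its geometric symmetrization, with entries S(A)_{ij} = sqrt(a_{ij} a_{ji}). Then r(S(A)) ≤ r(A), where r denotes the spectral radius. -/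
/-- The spectral radius of a real `n × n` matrix (largest modulus of a complex eigenvalue). -/
noncomputable def specRad {n : ℕ} (A : Matrix (Fin n) (Fin n) ℝ) : ℝ :=
  (spectralRadius ℂ (A.map (Complex.ofReal))).toReal

section Aux

attribute [local instance] Matrix.linftyOpNormedRing Matrix.linftyOpNormedAlgebra

open Filter Finset
open scoped Matrix

variable {n : ℕ}

private lemma pow_entry_nonneg (A : Matrix (Fin n) (Fin n) ℝ) (hA : ∀ i j, 0 ≤ A i j) :
    ∀ m i j, 0 ≤ (A ^ m) i j := by
  intro m
  induction m with
  | zero =>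
    intro i j
    rcases eq_or_ne i j with h | h <;> simp [Matrix.one_apply, h]
  | succ m ih =>
    intro i j
    rw [pow_succ, Matrix.mul_apply]
    exact Finset.sum_nonneg fun k _ => mul_nonneg (ih i k) (hA k j)

private lemma key_entry (A : Matrix (Fin n) (Fin n) ℝ) (hA : ∀ i j, 0 ≤ A i j) :
    ∀ m i j, ((Matrix.of fun i j => Real.sqrt (A i j * A j i)) ^ m) i j
      ≤ Real.sqrt ((A ^ m) i j * (A ^ m) j i) := by
  intro m
  induction m with
  | zero =>
    intro i j
    rcases eq_or_ne i j with h | h <;> simp [Matrix.one_apply, h]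
  | succ m ih =>
    intro i j
    set S : Matrix (Fin n) (Fin n) ℝ := Matrix.of fun i j => Real.sqrt (A i j * A j i) with hS
    have hApow := pow_entry_nonneg A hA
    calc (S ^ (m + 1)) i j = ∑ k, S i k * (S ^ m) k j := by
          rw [pow_succ', Matrix.mul_apply]
      _ ≤ ∑ k, Real.sqrt (A i k * (A ^ m) k j) * Real.sqrt (A k i * (A ^ m) j k) := by
          refine Finset.sum_le_sum fun k _ => ?_
          have h1 : S i k * (S ^ m) k j
              ≤ Real.sqrt (A i k * A k i) * Real.sqrt ((A ^ m) k j * (A ^ m) j k) := by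
            have : S i k = Real.sqrt (A i k * A k i) := rfl
            rw [this]
            exact mul_le_mul_of_nonneg_left (ih k j) (Real.sqrt_nonneg _)
          refine h1.trans_eq ?_
          rw [← Real.sqrt_mul (mul_nonneg (hA i k) (hA k i)),
            ← Real.sqrt_mul (mul_nonneg (hA i k) (hApow m k j))]
          congr 1
          ring
      _ ≤ Real.sqrt (∑ k, A i k * (A ^ m) k j) * Real.sqrt (∑ k, A k i * (A ^ m) j k) :=
          Real.sum_sqrt_mul_sqrt_le _ (fun k => mul_nonneg (hA i k) (hApow m k j))
            (fun k => mul_nonneg (hA k i) (hApow m j k))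
      _ = Real.sqrt ((A ^ (m + 1)) i j * (A ^ (m + 1)) j i) := by
          rw [← Real.sqrt_mul (Finset.sum_nonneg fun k _ =>
            mul_nonneg (hA i k) (hApow m k j))]
          congr 2
          · rw [pow_succ', Matrix.mul_apply]
          · rw [pow_succ, Matrix.mul_apply]
            exact Finset.sum_congr rfl fun k _ => mul_comm _ _

private lemma key_rowsum (A : Matrix (Fin n) (Fin n) ℝ) (hA : ∀ i j, 0 ≤ A i j) (m : ℕ)
    (i : Fin n) :
    ∑ j, ((Matrix.of fun i j => Real.sqrt (A i j * A j i)) ^ m) i j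
      ≤ Real.sqrt ((∑ j, (A ^ m) i j) * (∑ j, (A ^ m) j i)) := by
  have hApow := pow_entry_nonneg A hA
  calc ∑ j, ((Matrix.of fun i j => Real.sqrt (A i j * A j i)) ^ m) i j
      ≤ ∑ j, Real.sqrt ((A ^ m) i j) * Real.sqrt ((A ^ m) j i) := by
        refine Finset.sum_le_sum fun j _ => ?_
        refine (key_entry A hA m i j).trans_eq ?_
        exact Real.sqrt_mul (hApow m i j) _
    _ ≤ Real.sqrt (∑ j, (A ^ m) i j) * Real.sqrt (∑ j, (A ^ m) j i) :=
        Real.sum_sqrt_mul_sqrt_le _ (fun j => hApow m i j) (fun j => hApow m j i)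
    _ = Real.sqrt ((∑ j, (A ^ m) i j) * (∑ j, (A ^ m) j i)) :=
        (Real.sqrt_mul (Finset.sum_nonneg fun j _ => hApow m i j) _).symm

/-- Row sums of a nonnegative real matrix are bounded by the `L∞` operator norm of its
complexification. -/
private lemma rowsum_le_norm (M : Matrix (Fin n) (Fin n) ℝ) (hM : ∀ i j, 0 ≤ M i j)
    (i : Fin n) : ∑ j, M i j ≤ ‖M.map (Complex.ofReal)‖ := by
  rw [Matrix.linfty_opNorm_def]
  have h1 : ∑ j, M i j = ((∑ j, ‖(M.map (Complex.ofReal)) i j‖₊ : NNReal) : ℝ) := by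
    push_cast
    refine Finset.sum_congr rfl fun j _ => ?_
    simp only [Matrix.map_apply, Complex.norm_real]
    exact (Real.norm_of_nonneg (hM i j)).symm
  rw [h1]
  exact_mod_cast Finset.le_sup (f := fun i => ∑ j, ‖(M.map (Complex.ofReal)) i j‖₊)
    (Finset.mem_univ i)

private lemma norm_map_nonneg_eq (M : Matrix (Fin n) (Fin n) ℝ) (hM : ∀ i j, 0 ≤ M i j)
    (hn : 0 < n) : ∃ i, ‖M.map (Complex.ofReal)‖ = ∑ j, M i j := by
  haveI : Nonempty (Fin n) := ⟨⟨0, hn⟩⟩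
  obtain ⟨i, -, hi⟩ := Finset.exists_mem_eq_sup (Finset.univ : Finset (Fin n))
    Finset.univ_nonempty (fun i => ∑ j, ‖(M.map (Complex.ofReal)) i j‖₊)
  refine ⟨i, ?_⟩
  rw [Matrix.linfty_opNorm_def, hi]
  push_cast
  refine Finset.sum_congr rfl fun j _ => ?_
  simp only [Matrix.map_apply, Complex.norm_real]
  exact Real.norm_of_nonneg (hM i j)

private lemma spectralRadius_transpose (M : Matrix (Fin n) (Fin n) ℂ) :
    spectralRadius ℂ Mᵀ = spectralRadius ℂ M := by
  have h : spectrum ℂ Mᵀ = spectrum ℂ M := by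
    ext z
    simp only [spectrum.mem_iff]
    have key : algebraMap ℂ (Matrix (Fin n) (Fin n) ℂ) z - Mᵀ =
        (algebraMap ℂ (Matrix (Fin n) (Fin n) ℂ) z - M)ᵀ := by
      rw [Matrix.transpose_sub, Matrix.algebraMap_eq_diagonal, Matrix.diagonal_transpose]
    rw [key, Matrix.isUnit_transpose]
  unfold spectralRadius
  rw [h]

private lemma map_ofReal_pow (M : Matrix (Fin n) (Fin n) ℝ) (m : ℕ) :
    (M.map Complex.ofReal) ^ m = (M ^ m).map Complex.ofReal := by
  have h : ∀ N : Matrix (Fin n) (Fin n) ℝ,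
      N.map Complex.ofReal = Complex.ofRealHom.mapMatrix N := fun _ => rfl
  rw [h, h, ← map_pow]

private lemma specRad_main (hn : 0 < n) (A : Matrix (Fin n) (Fin n) ℝ)
    (hA : ∀ i j, 0 ≤ A i j) :
    specRad (Matrix.of fun i j => Real.sqrt (A i j * A j i)) ≤ specRad A := by
  haveI : Nonempty (Fin n) := ⟨⟨0, hn⟩⟩
  haveI : CompleteSpace (Matrix (Fin n) (Fin n) ℂ) := FiniteDimensional.complete ℂ _
  set S : Matrix (Fin n) (Fin n) ℝ := Matrix.of fun i j => Real.sqrt (A i j * A j i) with hSdef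
  have hSentry : ∀ i j, 0 ≤ S i j := fun i j => Real.sqrt_nonneg _
  set A' := A.map Complex.ofReal with hA'def
  set S' := S.map Complex.ofReal with hS'def
  set B' := A'ᵀ with hB'def
  have hBpow : ∀ m : ℕ, B' ^ m = ((A ^ m)ᵀ).map Complex.ofReal := by
    intro m
    rw [hB'def, hA'def, ← Matrix.transpose_pow, map_ofReal_pow, Matrix.transpose_map]
  -- the key norm inequality
  have hnorm : ∀ m : ℕ, ‖S' ^ m‖ ^ 2 ≤ ‖A' ^ m‖ * ‖B' ^ m‖ := by
    intro m
    rw [hS'def, hA'def, map_ofReal_pow, map_ofReal_pow, hBpow]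
    obtain ⟨i, hi⟩ := norm_map_nonneg_eq (S ^ m) (pow_entry_nonneg S hSentry m) hn
    rw [hi]
    have h1 : (∑ j, (S ^ m) i j) ^ 2 ≤ (∑ j, (A ^ m) i j) * (∑ j, (A ^ m) j i) := by
      have h2 := key_rowsum A hA m i
      have h3 : (0:ℝ) ≤ (∑ j, (A ^ m) i j) * (∑ j, (A ^ m) j i) :=
        mul_nonneg (Finset.sum_nonneg fun j _ => pow_entry_nonneg A hA m i j)
          (Finset.sum_nonneg fun j _ => pow_entry_nonneg A hA m j i)
      calc (∑ j, (S ^ m) i j) ^ 2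
          ≤ Real.sqrt ((∑ j, (A ^ m) i j) * (∑ j, (A ^ m) j i)) ^ 2 := by
            refine pow_le_pow_left₀ ?_ h2 2
            exact Finset.sum_nonneg fun j _ => pow_entry_nonneg S hSentry m i j
        _ = (∑ j, (A ^ m) i j) * (∑ j, (A ^ m) j i) := Real.sq_sqrt h3
    refine h1.trans (mul_le_mul ?_ ?_ ?_ (norm_nonneg _))
    · exact rowsum_le_norm (A ^ m) (pow_entry_nonneg A hA m) i
    · have := rowsum_le_norm ((A ^ m)ᵀ) (fun i j => pow_entry_nonneg A hA m j i) i
      exact le_trans (le_of_eq rfl) this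
    · exact Finset.sum_nonneg fun j _ => pow_entry_nonneg A hA m j i
  -- Gelfand's formula
  have hGS := spectrum.pow_nnnorm_pow_one_div_tendsto_nhds_spectralRadius S'
  have hGA := spectrum.pow_nnnorm_pow_one_div_tendsto_nhds_spectralRadius A'
  have hGB := spectrum.pow_nnnorm_pow_one_div_tendsto_nhds_spectralRadius B'
  set rA := spectralRadius ℂ A' with hrA
  set rS := spectralRadius ℂ S' with hrS
  have hrB : spectralRadius ℂ B' = rA := spectralRadius_transpose A'
  rw [hrB] at hGB
  have hrA_ne_top : rA ≠ ⊤ :=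
    (lt_of_le_of_lt (spectrum.spectralRadius_le_nnnorm (𝕜 := ℂ) (a := A')) ENNReal.coe_lt_top).ne
  -- limit of the RHS
  have t1 : Filter.Tendsto
      (fun m : ℕ => ((‖A' ^ m‖₊ : ENNReal) ^ (1 / (m:ℝ))) ^ ((1:ℝ)/2)) Filter.atTop
      (nhds (rA ^ ((1:ℝ)/2))) :=
    ((ENNReal.continuous_rpow_const (y := (1:ℝ)/2)).tendsto rA).comp hGA
  have t2 : Filter.Tendsto
      (fun m : ℕ => ((‖B' ^ m‖₊ : ENNReal) ^ (1 / (m:ℝ))) ^ ((1:ℝ)/2)) Filter.atTop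
      (nhds (rA ^ ((1:ℝ)/2))) :=
    ((ENNReal.continuous_rpow_const (y := (1:ℝ)/2)).tendsto rA).comp hGB
  have hhalf_ne_top : rA ^ ((1:ℝ)/2) ≠ ⊤ :=
    ENNReal.rpow_ne_top_of_nonneg (by norm_num) hrA_ne_top
  have tmul : Filter.Tendsto
      (fun m : ℕ => ((‖A' ^ m‖₊ : ENNReal) ^ (1 / (m:ℝ))) ^ ((1:ℝ)/2)
        * ((‖B' ^ m‖₊ : ENNReal) ^ (1 / (m:ℝ))) ^ ((1:ℝ)/2)) Filter.atTop
      (nhds rA) := by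
    have := ENNReal.Tendsto.mul t1 (Or.inr hhalf_ne_top) t2 (Or.inr hhalf_ne_top)
    convert this using 2
    rw [← ENNReal.rpow_add_of_nonneg ((1:ℝ)/2) ((1:ℝ)/2) (by norm_num) (by norm_num)]
    norm_num
  -- eventual inequality
  have hev : ∀ᶠ m : ℕ in Filter.atTop,
      (‖S' ^ m‖₊ : ENNReal) ^ (1 / (m:ℝ))
        ≤ ((‖A' ^ m‖₊ : ENNReal) ^ (1 / (m:ℝ))) ^ ((1:ℝ)/2)
          * ((‖B' ^ m‖₊ : ENNReal) ^ (1 / (m:ℝ))) ^ ((1:ℝ)/2) := by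
    refine Filter.eventually_atTop.2 ⟨1, fun m hm => ?_⟩
    have hm0 : (m:ℝ) ≠ 0 := Nat.cast_ne_zero.2 (Nat.one_le_iff_ne_zero.1 hm)
    -- nnnorm version of hnorm
    have hnn : ‖S' ^ m‖₊ ^ 2 ≤ ‖A' ^ m‖₊ * ‖B' ^ m‖₊ := by
      rw [← NNReal.coe_le_coe]
      push_cast
      exact hnorm m
    have hcoe : ((‖S' ^ m‖₊ : ENNReal)) ^ (2:ℝ)
        ≤ (‖A' ^ m‖₊ : ENNReal) * ‖B' ^ m‖₊ := by
      rw [show ((2:ℝ)) = ((2:ℕ):ℝ) by norm_num, ENNReal.rpow_natCast, ← ENNReal.coe_pow,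
        ← ENNReal.coe_mul]
      exact_mod_cast hnn
    calc (‖S' ^ m‖₊ : ENNReal) ^ (1 / (m:ℝ))
        = ((‖S' ^ m‖₊ : ENNReal) ^ (2:ℝ)) ^ (1 / (2 * (m:ℝ))) := by
          rw [← ENNReal.rpow_mul]
          congr 1
          field_simp
      _ ≤ ((‖A' ^ m‖₊ : ENNReal) * ‖B' ^ m‖₊) ^ (1 / (2 * (m:ℝ))) := by
          refine ENNReal.rpow_le_rpow hcoe ?_
          positivity
      _ = ((‖A' ^ m‖₊ : ENNReal)) ^ (1 / (2 * (m:ℝ)))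
          * ((‖B' ^ m‖₊ : ENNReal)) ^ (1 / (2 * (m:ℝ))) :=
          ENNReal.mul_rpow_of_nonneg _ _ (by positivity)
      _ = ((‖A' ^ m‖₊ : ENNReal) ^ (1 / (m:ℝ))) ^ ((1:ℝ)/2)
          * ((‖B' ^ m‖₊ : ENNReal) ^ (1 / (m:ℝ))) ^ ((1:ℝ)/2) := by
          rw [← ENNReal.rpow_mul, ← ENNReal.rpow_mul]
          congr 2 <;> field_simp <;> ring
  have hle : rS ≤ rA := le_of_tendsto_of_tendsto hGS tmul hev
  exact ENNReal.toReal_mono hrA_ne_top hle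

end Aux

/-- For an entrywise nonnegative matrix `A`, the geometric symmetrization
`S(A)` with entries `√(a_{ij} a_{ji})` satisfies `r(S(A)) ≤ r(A)`. -/
theorem specRad_geom_symmetrization_le {n : ℕ} (A : Matrix (Fin n) (Fin n) ℝ)
    (hA : ∀ i j, 0 ≤ A i j) :
    specRad (Matrix.of fun i j => Real.sqrt (A i j * A j i)) ≤ specRad A := by
  rcases Nat.eq_zero_or_pos n with hn | hn
  · subst hn
    have h0 : (Matrix.of fun i j => Real.sqrt (A i j * A j i)) = A := by
      ext i j
      exact absurd i.2 (Nat.not_lt_zero _)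
    rw [h0]
  · exact specRad_main hn A hA
end

section
/- Let Σ be a bounded nonempty set of n×n complex matrices. Then the generalized spectral radius r(Σ) = limsup_{m→∞} (sup_{A ∈ Σ^m} r(A))^{1/m} equals sup_{m ∈ ℕ} (sup_{A ∈ Σ^m} r(A))^{1/m}, where Σ^m = {A_1 ··· A_m : A_i ∈ Σ} and r(A) is the spectral radius of A. -/
open Filter

/-! Write `ρ m` for the largest spectral radius of a product in `Σ^m`. If `A ∈ Σ^m` then
`A ^ k ∈ Σ^(m k)` and `r(A) ^ k ≤ r(A ^ k)`, so `ρ m ^ k ≤ ρ (m k)`, i.e.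
`ρ m ^ (1/m) ≤ ρ (m k) ^ (1/(m k))`: each term of the sequence `ρ m ^ (1/m)` is dominated by
terms arbitrarily far out, hence by its limsup, while the limsup is trivially at most the
supremum. Boundedness of `Σ` gives `ρ m ≤ C ^ m`, which keeps the sequence bounded. -/

/-- The spectral radius of a complex `n × n` matrix, as a real number. -/
noncomputable def cSpecRad {n : ℕ} (A : Matrix (Fin n) (Fin n) ℂ) : ℝ :=
  (spectralRadius ℂ A).toReal

/-- The ℓ² → ℓ² operator norm of a complex `n × n` matrix. -/
noncomputable def cOpNorm {n : ℕ} (A : Matrix (Fin n) (Fin n) ℂ) : ℝ :=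
  ‖LinearMap.toContinuousLinearMap (Matrix.toEuclideanLin A)‖

/-- `Σ^m`: the set of all products of `m` elements of `Σ`. -/
def prodSet {n : ℕ} (S : Set (Matrix (Fin n) (Fin n) ℂ)) (m : ℕ) :
    Set (Matrix (Fin n) (Fin n) ℂ) :=
  {A | ∃ l : List (Matrix (Fin n) (Fin n) ℂ), l.length = m ∧ (∀ B ∈ l, B ∈ S) ∧ l.prod = A}

theorem limsup_eq_iSup_succ_of_le_mul {α : Type*} [ConditionallyCompleteLinearOrder α]
    {f : ℕ → α} (hf : IsBoundedUnder (· ≤ ·) atTop f)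
    (hmul : ∀ m k, k ≠ 0 → f m ≤ f (m * k)) :
    limsup f atTop = ⨆ m, f (m + 1) := by
  have hfreq : ∀ m, m ≠ 0 → ∃ᶠ j in atTop, f m ≤ f j := fun m hm =>
    frequently_atTop.2 fun N =>
      ⟨m * (N + 1), (Nat.le_succ N).trans (Nat.le_mul_of_pos_left _ (Nat.pos_of_ne_zero hm)),
        hmul m (N + 1) N.succ_ne_zero⟩
  have hle : ∀ m, f (m + 1) ≤ limsup f atTop := fun m =>
    le_limsup_of_frequently_le (hfreq _ m.succ_ne_zero) hf
  refine le_antisymm ?_ (ciSup_le hle)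
  refine limsup_le_of_le (IsCoboundedUnder.of_frequently_ge (hfreq 1 one_ne_zero)) ?_
  filter_upwards [eventually_ge_atTop 1] with m hm
  obtain ⟨j, rfl⟩ := Nat.exists_eq_add_of_le' hm
  exact le_ciSup ⟨_, Set.forall_mem_range.2 hle⟩ j

theorem Real.rpow_inv_natCast_le_of_pow_le {x y : ℝ} (hx : 0 ≤ x) {m k : ℕ} (hk : k ≠ 0)
    (h : x ^ k ≤ y) : x ^ (m : ℝ)⁻¹ ≤ y ^ ((m * k : ℕ) : ℝ)⁻¹ := by
  have hkR : (k : ℝ) ≠ 0 := Nat.cast_ne_zero.2 hk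
  calc x ^ (m : ℝ)⁻¹ = (x ^ k) ^ ((m * k : ℕ) : ℝ)⁻¹ := by
        rw [← Real.rpow_natCast, ← Real.rpow_mul hx, Nat.cast_mul, mul_inv, mul_left_comm,
          mul_inv_cancel₀ hkR, mul_one]
    _ ≤ y ^ ((m * k : ℕ) : ℝ)⁻¹ := Real.rpow_le_rpow (pow_nonneg hx k) h (by positivity)

theorem limsup_rpow_inv_eq_iSup_of_pow_le_mul {ρ : ℕ → ℝ} {C : ℝ} (hρ : ∀ m, 0 ≤ ρ m)
    (hC : 0 ≤ C) (hρC : ∀ m, ρ m ≤ C ^ m) (hpow : ∀ m k, k ≠ 0 → ρ m ^ k ≤ ρ (m * k)) :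
    limsup (fun m : ℕ => ρ m ^ (m : ℝ)⁻¹) atTop = ⨆ m : ℕ, ρ (m + 1) ^ ((m : ℝ) + 1)⁻¹ := by
  have hbdd : IsBoundedUnder (· ≤ ·) atTop fun m : ℕ => ρ m ^ (m : ℝ)⁻¹ := by
    refine ⟨C, eventually_map.2 ?_⟩
    filter_upwards [eventually_ne_atTop 0] with m hm
    rw [Real.rpow_inv_le_iff_of_pos (hρ m) hC (by positivity), Real.rpow_natCast]
    exact hρC m
  rw [limsup_eq_iSup_succ_of_le_mul hbdd fun m k hk =>
    Real.rpow_inv_natCast_le_of_pow_le (hρ m) hk (hpow m k hk)]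
  simp only [Nat.cast_add_one]

namespace Matrix

variable {n : ℕ}

theorem spectralRadius_le_nnnorm_toEuclideanCLM (A : Matrix (Fin n) (Fin n) ℂ) :
    spectralRadius ℂ A ≤ ‖toEuclideanCLM (𝕜 := ℂ) A‖₊ := by
  rcases isEmpty_or_nonempty (Fin n) with _ | _
  -- for `n = 0` the operator algebra is the zero ring, which is not a `NormOneClass`
  · simp
  · rw [spectralRadius, ← AlgEquiv.spectrum_eq (toEuclideanCLM (n := Fin n) (𝕜 := ℂ)) A]
    exact spectrum.spectralRadius_le_nnnorm _

theorem spectralRadius_ne_top (A : Matrix (Fin n) (Fin n) ℂ) : spectralRadius ℂ A ≠ ⊤ :=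
  ne_top_of_le_ne_top ENNReal.coe_ne_top (spectralRadius_le_nnnorm_toEuclideanCLM A)

end Matrix

section

variable {n : ℕ}

theorem cSpecRad_nonneg (A : Matrix (Fin n) (Fin n) ℂ) : 0 ≤ cSpecRad A :=
  ENNReal.toReal_nonneg

theorem cOpNorm_eq_norm_toEuclideanCLM (A : Matrix (Fin n) (Fin n) ℂ) :
    cOpNorm A = ‖Matrix.toEuclideanCLM (𝕜 := ℂ) A‖ :=
  rfl

theorem cSpecRad_le_cOpNorm (A : Matrix (Fin n) (Fin n) ℂ) : cSpecRad A ≤ cOpNorm A :=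
  ENNReal.toReal_mono ENNReal.coe_ne_top (Matrix.spectralRadius_le_nnnorm_toEuclideanCLM A)

theorem cSpecRad_pow_le (A : Matrix (Fin n) (Fin n) ℂ) {k : ℕ} (hk : k ≠ 0) :
    cSpecRad A ^ k ≤ cSpecRad (A ^ k) := by
  rw [cSpecRad, cSpecRad, ← ENNReal.toReal_pow]
  exact ENNReal.toReal_mono (Matrix.spectralRadius_ne_top _)
    (spectrum.spectralRadius_pow_le A k hk)

theorem cOpNorm_mul_le (A B : Matrix (Fin n) (Fin n) ℂ) :
    cOpNorm (A * B) ≤ cOpNorm A * cOpNorm B := by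
  simpa only [cOpNorm_eq_norm_toEuclideanCLM, map_mul] using norm_mul_le _ _

theorem cOpNorm_one_le : cOpNorm (1 : Matrix (Fin n) (Fin n) ℂ) ≤ 1 := by
  rw [cOpNorm_eq_norm_toEuclideanCLM, map_one]
  exact ContinuousLinearMap.norm_id_le

variable {S : Set (Matrix (Fin n) (Fin n) ℂ)}

theorem mul_mem_prodSet {A B : Matrix (Fin n) (Fin n) ℂ} {m m' : ℕ} (hA : A ∈ prodSet S m)
    (hB : B ∈ prodSet S m') : A * B ∈ prodSet S (m + m') := by
  obtain ⟨l, rfl, hl, rfl⟩ := hA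
  obtain ⟨l', rfl, hl', rfl⟩ := hB
  refine ⟨l ++ l', List.length_append, fun B hB => ?_, List.prod_append⟩
  exact (List.mem_append.1 hB).elim (hl B) (hl' B)

theorem pow_mem_prodSet {A : Matrix (Fin n) (Fin n) ℂ} {m : ℕ} (hA : A ∈ prodSet S m) (k : ℕ) :
    A ^ k ∈ prodSet S (m * k) := by
  induction k with
  | zero => exact ⟨[], rfl, by simp, by simp⟩
  | succ k ih => simpa only [pow_succ, Nat.mul_succ] using mul_mem_prodSet ih hA

theorem sSup_cSpecRad_nonneg (S : Set (Matrix (Fin n) (Fin n) ℂ)) (m : ℕ) :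
    0 ≤ sSup (cSpecRad '' prodSet S m) :=
  Real.sSup_nonneg (Set.forall_mem_image.2 fun A _ => cSpecRad_nonneg A)

variable {C : ℝ}

theorem cOpNorm_le_pow_of_mem_prodSet (hS : ∀ A ∈ S, cOpNorm A ≤ C)
    {A : Matrix (Fin n) (Fin n) ℂ} {m : ℕ} (hA : A ∈ prodSet S m) : cOpNorm A ≤ C ^ m := by
  obtain ⟨l, rfl, hl, rfl⟩ := hA
  induction l with
  | nil => simpa using cOpNorm_one_le
  | cons B l ih =>
    have hB : cOpNorm B ≤ C := hS B (hl B List.mem_cons_self)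
    calc cOpNorm (B * l.prod) ≤ cOpNorm B * cOpNorm l.prod := cOpNorm_mul_le _ _
      _ ≤ C * C ^ l.length := mul_le_mul hB (ih fun B' h => hl B' (List.mem_cons_of_mem _ h))
          (norm_nonneg _) ((norm_nonneg _).trans hB)
      _ = C ^ (B :: l).length := (pow_succ' _ _).symm

theorem bddAbove_cSpecRad_prodSet (hS : ∀ A ∈ S, cOpNorm A ≤ C) (m : ℕ) :
    BddAbove (cSpecRad '' prodSet S m) :=
  ⟨C ^ m, Set.forall_mem_image.2 fun _ hA =>
    (cSpecRad_le_cOpNorm _).trans (cOpNorm_le_pow_of_mem_prodSet hS hA)⟩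

theorem sSup_cSpecRad_prodSet_le_pow (hS : ∀ A ∈ S, cOpNorm A ≤ C) (hC : 0 ≤ C) (m : ℕ) :
    sSup (cSpecRad '' prodSet S m) ≤ C ^ m :=
  Real.sSup_le (Set.forall_mem_image.2 fun _ hA =>
    (cSpecRad_le_cOpNorm _).trans (cOpNorm_le_pow_of_mem_prodSet hS hA)) (pow_nonneg hC m)

theorem sSup_cSpecRad_prodSet_pow_le (hS : ∀ A ∈ S, cOpNorm A ≤ C) (m : ℕ) {k : ℕ}
    (hk : k ≠ 0) :
    sSup (cSpecRad '' prodSet S m) ^ k ≤ sSup (cSpecRad '' prodSet S (m * k)) := by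
  have hρ := sSup_cSpecRad_nonneg S (m * k)
  have hkR : (0 : ℝ) < k := Nat.cast_pos.2 (Nat.pos_of_ne_zero hk)
  rw [← Real.rpow_natCast, ← Real.le_rpow_inv_iff_of_pos (sSup_cSpecRad_nonneg S m) hρ hkR]
  refine Real.sSup_le (Set.forall_mem_image.2 fun A hA => ?_) (Real.rpow_nonneg hρ _)
  rw [Real.le_rpow_inv_iff_of_pos (cSpecRad_nonneg A) hρ hkR, Real.rpow_natCast]
  exact (cSpecRad_pow_le A hk).trans
    (le_csSup (bddAbove_cSpecRad_prodSet hS _) ⟨A ^ k, pow_mem_prodSet hA k, rfl⟩)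

end

theorem generalized_spectral_radius_limsup_eq_sup_general {n : ℕ}
    (S : Set (Matrix (Fin n) (Fin n) ℂ))
    (hbdd : ∃ C : ℝ, ∀ A ∈ S, cOpNorm A ≤ C) :
    limsup (fun m : ℕ => (sSup (cSpecRad '' prodSet S m)) ^ ((m : ℝ)⁻¹)) atTop =
      ⨆ m : ℕ, (sSup (cSpecRad '' prodSet S (m + 1))) ^ (((m : ℝ) + 1)⁻¹) := by
  obtain ⟨C, hC⟩ := hbdd
  have hS : ∀ A ∈ S, cOpNorm A ≤ max C 0 := fun A hA => (hC A hA).trans (le_max_left _ _)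
  exact limsup_rpow_inv_eq_iSup_of_pow_le_mul (sSup_cSpecRad_nonneg S) (le_max_right _ _)
    (sSup_cSpecRad_prodSet_le_pow hS (le_max_right _ _))
    fun m _ hk => sSup_cSpecRad_prodSet_pow_le hS m hk

/-- For a bounded nonempty set `Σ` of `n × n` complex matrices, the
generalized spectral radius `limsup_{m→∞} (sup_{A ∈ Σ^m} r(A))^{1/m}` equals
`sup_{m ≥ 1} (sup_{A ∈ Σ^m} r(A))^{1/m}`. -/
theorem generalized_spectral_radius_limsup_eq_sup {n : ℕ}
    (S : Set (Matrix (Fin n) (Fin n) ℂ)) (hne : S.Nonempty)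
    (hbdd : ∃ C : ℝ, ∀ A ∈ S, cOpNorm A ≤ C) :
    limsup (fun m : ℕ => (sSup (cSpecRad '' prodSet S m)) ^ ((m : ℝ)⁻¹)) atTop =
      ⨆ m : ℕ, (sSup (cSpecRad '' prodSet S (m + 1))) ^ (((m : ℝ) + 1)⁻¹) :=
  generalized_spectral_radius_limsup_eq_sup_general S hbdd
end

section
/- Let Σ and Ψ be bounded sets of n×n complex matrices. Then the joint spectral radius satisfies r̂(ΣΨ) = r̂(ΨΣ), where ΣΨ = {AB : A ∈ Σ, B ∈ Ψ} and r̂(Φ) = lim_{m→∞} (sup_{A ∈ Φ^m} ‖A‖)^{1/m}. -/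
/-- The joint spectral radius `r̂(Φ) = inf_{m ≥ 1} (sup_{A ∈ Φ^m} ‖A‖)^{1/m}` (the limit in
the definition equals this infimum). -/
noncomputable def jointRad {n : ℕ} (S : Set (Matrix (Fin n) (Fin n) ℂ)) : ℝ :=
  ⨅ m : ℕ, (sSup (cOpNorm '' prodSet S (m + 1))) ^ (((m : ℝ) + 1)⁻¹)

/-!
Since `(ΣΨ)^(k+1) = Σ (ΨΣ)^k Ψ`, the sup-norms `u k` of `(ΣΨ)^k` and `v k` of `(ΨΣ)^k` satisfy
`u (k+1) ≤ C v k`, and `v` is submultiplicative. Hence for every `q`,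
`u (qj+1)^(1/(qj+1)) ≤ (C v(q)^j)^(1/(qj+1)) → v(q)^(1/q)` as `j → ∞`, so `r̂(ΣΨ) ≤ r̂(ΨΣ)`;
the reverse inequality is the same statement with `Σ` and `Ψ` exchanged.
-/

open Filter Topology Set
open scoped Pointwise

lemma tendsto_mul_pow_rpow_inv {C t q : ℝ} (hC : 0 < C) (ht : 0 ≤ t) (hq : 0 < q) :
    Tendsto (fun k : ℕ => (C * t ^ k) ^ (q * k + 1)⁻¹) atTop (𝓝 (t ^ q⁻¹)) := by
  have hexp : Tendsto (fun k : ℕ => (q * k + 1)⁻¹) atTop (𝓝 0) :=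
    tendsto_inv_atTop_zero.comp <| tendsto_atTop_add_const_right _ 1 <|
      tendsto_natCast_atTop_atTop.const_mul_atTop hq
  have hratio : Tendsto (fun k : ℕ => k * (q * k + 1)⁻¹) atTop (𝓝 q⁻¹) := by
    have h := (tendsto_natCast_div_add_atTop q⁻¹).const_mul q⁻¹
    rw [mul_one] at h
    refine h.congr fun k => ?_
    have : (k : ℝ) + q⁻¹ ≠ 0 := by positivity
    field_simp
  have h := ((Real.continuousAt_const_rpow hC.ne').tendsto.comp hexp).mul
    ((Real.continuousAt_const_rpow' (a := t) (inv_ne_zero hq.ne')).tendsto.comp hratio)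
  simp only [Real.rpow_zero, one_mul] at h
  refine h.congr fun k => ?_
  simp only [Function.comp_apply]
  rw [Real.mul_rpow hC.le (pow_nonneg ht k), Real.rpow_natCast_mul ht]

lemma apply_mul_succ_le_pow_of_submultiplicative {v : ℕ → ℝ} (hv : 0 ≤ v)
    (hsub : ∀ a b, v (a + b) ≤ v a * v b) (q j : ℕ) : v (q * (j + 1)) ≤ v q ^ (j + 1) := by
  induction j with
  | zero => simp
  | succ j ih =>
    calc v (q * (j + 1 + 1)) = v (q * (j + 1) + q) := by ring_nf
      _ ≤ v (q * (j + 1)) * v q := hsub _ _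
      _ ≤ v q ^ (j + 1) * v q := mul_le_mul_of_nonneg_right ih (hv q)
      _ = v q ^ (j + 1 + 1) := (pow_succ _ _).symm

lemma iInf_rpow_le_of_le_mul {u v : ℕ → ℝ} {C : ℝ} (hu : 0 ≤ u) (hv : 0 ≤ v)
    (hsub : ∀ a b, v (a + b) ≤ v a * v b) (huv : ∀ k, u (k + 1) ≤ C * v k) :
    ⨅ m : ℕ, u (m + 1) ^ ((m : ℝ) + 1)⁻¹ ≤ ⨅ m : ℕ, v (m + 1) ^ ((m : ℝ) + 1)⁻¹ := by
  refine le_ciInf fun m => ?_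
  -- `tendsto_mul_pow_rpow_inv` needs a positive constant.
  set C' := max C 1
  have hbdd : BddBelow (range fun m : ℕ => u (m + 1) ^ ((m : ℝ) + 1)⁻¹) :=
    ⟨0, by rintro _ ⟨j, rfl⟩; exact Real.rpow_nonneg (hu _) _⟩
  have hbound : ∀ j : ℕ,
      ⨅ m : ℕ, u (m + 1) ^ ((m : ℝ) + 1)⁻¹
        ≤ (C' * v (m + 1) ^ (j + 1)) ^ (((m : ℝ) + 1) * ((j + 1 : ℕ) : ℝ) + 1)⁻¹ := by
    intro j
    have hu_le : u ((m + 1) * (j + 1) + 1) ≤ C' * v (m + 1) ^ (j + 1) :=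
      calc u ((m + 1) * (j + 1) + 1) ≤ C * v ((m + 1) * (j + 1)) := huv _
        _ ≤ C' * v ((m + 1) * (j + 1)) := mul_le_mul_of_nonneg_right (le_max_left _ _) (hv _)
        _ ≤ C' * v (m + 1) ^ (j + 1) :=
          mul_le_mul_of_nonneg_left (apply_mul_succ_le_pow_of_submultiplicative hv hsub _ _)
            (zero_le_one.trans (le_max_right _ _))
    calc ⨅ m : ℕ, u (m + 1) ^ ((m : ℝ) + 1)⁻¹
        ≤ u ((m + 1) * (j + 1) + 1) ^ ((((m + 1) * (j + 1) : ℕ) : ℝ) + 1)⁻¹ := ciInf_le hbdd _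
      _ ≤ _ := by
        push_cast
        exact Real.rpow_le_rpow (hu _) hu_le (by positivity)
  have hlim := (tendsto_add_atTop_iff_nat 1).2 <|
    tendsto_mul_pow_rpow_inv (C := C') (lt_of_lt_of_le one_pos (le_max_right _ _)) (hv (m + 1))
      (q := (m : ℝ) + 1) (by positivity)
  exact ge_of_tendsto hlim (Eventually.of_forall hbound)

section SeminormedRing

variable {R : Type*} [SeminormedRing R] {S T : Set R}

lemma sSup_norm_image_nonneg (S : Set R) : 0 ≤ sSup (norm '' S) :=
  Real.sSup_nonneg (by rintro _ ⟨x, _, rfl⟩; exact norm_nonneg x)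

lemma bddAbove_norm_image_mul (hS : BddAbove (norm '' S)) (hT : BddAbove (norm '' T)) :
    BddAbove (norm '' (S * T)) := by
  obtain ⟨a, ha⟩ := hS
  obtain ⟨b, hb⟩ := hT
  refine ⟨a * b, ?_⟩
  rintro _ ⟨_, ⟨x, hx, y, hy, rfl⟩, rfl⟩
  exact norm_mul_le_of_le (ha (mem_image_of_mem _ hx)) (hb (mem_image_of_mem _ hy))

lemma bddAbove_norm_image_pow (hS : BddAbove (norm '' S)) (m : ℕ) :
    BddAbove (norm '' (S ^ m)) := by
  induction m with
  | zero => simp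
  | succ m ih => rw [pow_succ]; exact bddAbove_norm_image_mul ih hS

lemma sSup_norm_image_mul_le (hS : BddAbove (norm '' S)) (hT : BddAbove (norm '' T)) :
    sSup (norm '' (S * T)) ≤ sSup (norm '' S) * sSup (norm '' T) := by
  refine Real.sSup_le ?_ (mul_nonneg (sSup_norm_image_nonneg S) (sSup_norm_image_nonneg T))
  rintro _ ⟨_, ⟨x, hx, y, hy, rfl⟩, rfl⟩
  exact norm_mul_le_of_le (le_csSup hS (mem_image_of_mem _ hx)) (le_csSup hT (mem_image_of_mem _ hy))

lemma sSup_norm_image_mul_pow_succ_le (hS : BddAbove (norm '' S)) (hT : BddAbove (norm '' T))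
    (k : ℕ) : sSup (norm '' ((S * T) ^ (k + 1)))
      ≤ sSup (norm '' S) * sSup (norm '' T) * sSup (norm '' ((T * S) ^ k)) := by
  have hTS := bddAbove_norm_image_pow (bddAbove_norm_image_mul hT hS) k
  calc sSup (norm '' ((S * T) ^ (k + 1))) = sSup (norm '' (S * (T * S) ^ k * T)) := by
        rw [← mul_pow_mul, mul_assoc, ← pow_succ]
    _ ≤ sSup (norm '' (S * (T * S) ^ k)) * sSup (norm '' T) :=
        sSup_norm_image_mul_le (bddAbove_norm_image_mul hS hTS) hT
    _ ≤ sSup (norm '' S) * sSup (norm '' ((T * S) ^ k)) * sSup (norm '' T) :=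
        mul_le_mul_of_nonneg_right (sSup_norm_image_mul_le hS hTS) (sSup_norm_image_nonneg T)
    _ = sSup (norm '' S) * sSup (norm '' T) * sSup (norm '' ((T * S) ^ k)) := by ring

theorem iInf_sSup_norm_image_mul_pow_le (hS : BddAbove (norm '' S))
    (hT : BddAbove (norm '' T)) :
    ⨅ m : ℕ, sSup (norm '' ((S * T) ^ (m + 1))) ^ ((m : ℝ) + 1)⁻¹
      ≤ ⨅ m : ℕ, sSup (norm '' ((T * S) ^ (m + 1))) ^ ((m : ℝ) + 1)⁻¹ := by
  have hTS := bddAbove_norm_image_pow (bddAbove_norm_image_mul hT hS)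
  refine iInf_rpow_le_of_le_mul (u := fun k => sSup (norm '' ((S * T) ^ k)))
    (v := fun k => sSup (norm '' ((T * S) ^ k))) (fun _ => sSup_norm_image_nonneg _)
    (fun _ => sSup_norm_image_nonneg _) (fun a b => ?_) (sSup_norm_image_mul_pow_succ_le hS hT)
  rw [pow_add]
  exact sSup_norm_image_mul_le (hTS a) (hTS b)

end SeminormedRing

open scoped Matrix.Norms.L2Operator

lemma prodSet_eq_pow {n : ℕ} (S : Set (Matrix (Fin n) (Fin n) ℂ)) (m : ℕ) :
    prodSet S m = S ^ m := by
  induction m with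
  | zero => ext A; simp [prodSet, eq_comm]
  | succ m ih =>
    ext A
    rw [pow_succ', ← ih]
    constructor
    · rintro ⟨_ | ⟨B, l⟩, hlen, hmem, rfl⟩
      · simp at hlen
      · exact mul_mem_mul (hmem B (by simp))
          ⟨l, by simpa using hlen, fun C hC => hmem C (by simp [hC]), rfl⟩
    · rintro ⟨B, hB, _, ⟨l, rfl, hmem, rfl⟩, rfl⟩
      exact ⟨B :: l, rfl, by simpa [hB] using hmem, rfl⟩

lemma jointRad_eq_iInf {n : ℕ} (S : Set (Matrix (Fin n) (Fin n) ℂ)) :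
    jointRad S = ⨅ m : ℕ, sSup (norm '' (S ^ (m + 1))) ^ ((m : ℝ) + 1)⁻¹ := by
  simp only [jointRad, prodSet_eq_pow]
  -- `cOpNorm` is definitionally the norm of `Matrix.instL2OpNormedAddCommGroup`.
  rfl

lemma bddAbove_norm_image_of_cOpNorm_le {n : ℕ} {S : Set (Matrix (Fin n) (Fin n) ℂ)}
    (hS : ∃ C : ℝ, ∀ A ∈ S, cOpNorm A ≤ C) : BddAbove (norm '' S) := by
  obtain ⟨C, hC⟩ := hS
  exact ⟨C, by rintro _ ⟨A, hA, rfl⟩; exact hC A hA⟩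

/-- For bounded sets `Σ, Psi` of `n × n` complex matrices,
`r̂(ΣPsi) = r̂(PsiΣ)`, where `ΣPsi = {AB : A ∈ Σ, B ∈ Psi}`. -/
theorem jointRad_mul_comm {n : ℕ} (Sig Psi : Set (Matrix (Fin n) (Fin n) ℂ))
    (hSig : ∃ C : ℝ, ∀ A ∈ Sig, cOpNorm A ≤ C) (hPsi : ∃ C : ℝ, ∀ A ∈ Psi, cOpNorm A ≤ C) :
    jointRad (Set.image2 (· * ·) Sig Psi) = jointRad (Set.image2 (· * ·) Psi Sig) := by
  have hS := bddAbove_norm_image_of_cOpNorm_le hSig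
  have hP := bddAbove_norm_image_of_cOpNorm_le hPsi
  simp only [jointRad_eq_iInf, image2_mul]
  exact le_antisymm (iInf_sSup_norm_image_mul_pow_le hS hP) (iInf_sSup_norm_image_mul_pow_le hP hS)
end
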